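/- Let $A \in \mathbb{R}^{m \times n}$ and let $[m] = \mathcal{P}_1 \uplus \cdots \uplus \mathcal{P}_p$ be a partition into disjoint parts with $|\mathcal{P}_l| = m_l$. Write the multivariate characteristic polynomial $\det(AA^T - x_1 I_1 - \cdots - x_p I_p) = \sum_{i_1=0}^{m_1} \cdots \sum_{i_p=0}^{m_p} c_{i_1,\dots,i_p} x_1^{i_1} \cdots x_p^{i_p}$, where $I_l$ is the $m \times m$ diagonal 0/1 matrix with $(I_l)_{i,i}=1$ iff $i \in \mathcal{P}_l$. Then for any integers $0 \le k_l \le m_l$ ($1 \le l \le p$), with $k = \sum_{l=1}^p k_l$, one has $c_{m_1-k_1,\dots,m_p-k_p} = (-1)^{m-k} \sum_{S} \det(A_S A_S^T)$, where the sum runs over all $S \subseteq [m]$ with $|S \cap \mathcal{P}_l| = k_l$ for every $1 \le l \le p$. -/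

import Mathlib

/-!
Expanding `det (M + diagonal d)` multilinearly in the rows gives
`∑_S det M_{S,S} · ∏_{i ∉ S} d_i`. With `M = AAᵀ` and `d_i = -x_{part i}`, the summand for `S`
is `(-1)^{|Sᶜ|} det(A_S A_Sᵀ) ∏_l x_l^{|Sᶜ ∩ 𝒫_l|}`, and `|Sᶜ ∩ 𝒫_l| = m_l - k_l` exactly when
`|S ∩ 𝒫_l| = k_l`.
-/

open scoped Matrix

/-- `det(A_S A_S^T)`, i.e. the determinant of the principal submatrix `(AA^T)_{S,S}`. -/
noncomputable def subDet {m n : ℕ} (A : Matrix (Fin m) (Fin n) ℝ) (S : Finset (Fin m)) : ℝ :=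
  Matrix.det ((A * Aᵀ).submatrix (fun i : {x // x ∈ S} => i.1) (fun j : {x // x ∈ S} => j.1))

/-- The coefficient `c_{e₁,…,e_p}` of the monomial `x₁^{e₁} ⋯ x_p^{e_p}` in the multivariate
characteristic polynomial `det(M - x₁I₁ - ⋯ - x_pI_p)` of a square matrix `M`, where the
partition `[m] = 𝒫₁ ⊎ ⋯ ⊎ 𝒫_p` is encoded by the labelling function `part` (so
`𝒫_l = part⁻¹(l)`), and `I_l` is the diagonal 0/1 matrix supported on `𝒫_l`. -/
noncomputable def mcharCoeff {m p : ℕ} (M : Matrix (Fin m) (Fin m) ℝ) (part : Fin m → Fin p)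
    (e : Fin p → ℕ) : ℝ :=
  MvPolynomial.coeff (Finsupp.equivFunOnFinite.symm e)
    (Matrix.det (Matrix.of fun i j =>
      MvPolynomial.C (M i j) - (if i = j then MvPolynomial.X (part i) else 0)))

open Finset

namespace Matrix

variable {n R : Type*} [Fintype n] [DecidableEq n] [CommRing R]

theorem det_add_diagonal (M : Matrix n n R) (d : n → R) :
    det (M + diagonal d) =
      ∑ s : Finset n, det (M.submatrix ((↑) : s → n) (↑)) * ∏ i ∈ sᶜ, d i := by
  have hrows : M + diagonal d = of (M.row + fun i => d i • (1 : Matrix n n R).row i) := by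
    ext i j; by_cases h : i = j <;> simp [h]
  have hpiece (s : Finset n) : s.piecewise M.row (fun i => d i • (1 : Matrix n n R).row i) =
      fun i => (if i ∈ s then 1 else d i) • s.piecewise M.row (1 : Matrix n n R).row i := by
    ext i j; by_cases h : i ∈ s <;> simp [h]
  rw [hrows]
  change detRowAlternating (M.row + fun i => d i • (1 : Matrix n n R).row i) = _
  rw [detRowAlternating.map_add_univ]
  refine sum_congr rfl fun s _ => ?_
  rw [hpiece, detRowAlternating.map_smul_univ, smul_eq_mul]
  change _ * det (of (s.piecewise M.row (1 : Matrix n n R).row)) = _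
  rw [det_piecewise_one_eq_submatrix_det, mul_comm]
  simp [prod_ite, filter_not, compl_eq_univ_sdiff]

end Matrix

theorem Finsupp.sum_single_one_apply {ι σ : Type*} [DecidableEq σ] (t : Finset ι) (f : ι → σ)
    (l : σ) : (∑ i ∈ t, single (f i) 1 : σ →₀ ℕ) l = #{i ∈ t | f i = l} := by
  rw [card_filter, finsetSum_apply]
  exact Finset.sum_congr rfl fun i _ => by rw [single_apply]

theorem MvPolynomial.coeff_prod_neg_X {R σ ι : Type*} [CommRing R] [DecidableEq σ] [Fintype σ]
    (t : Finset ι) (f : ι → σ) (e : σ →₀ ℕ) :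
    coeff e (∏ i ∈ t, -X (f i) : MvPolynomial σ R) =
      if ∀ l, #{i ∈ t | f i = l} = e l then (-1) ^ #t else 0 := by
  have hX : ∏ i ∈ t, (X (f i) : MvPolynomial σ R) =
      monomial (∑ i ∈ t, Finsupp.single (f i) 1) 1 := by
    rw [monomial_sum_one]; rfl
  rw [prod_neg, hX, ← map_one C, ← map_neg C, ← map_pow, coeff_C_mul, coeff_monomial, mul_ite,
    mul_one, mul_zero]
  simp only [DFunLike.ext_iff, Finsupp.sum_single_one_apply]

theorem card_filter_compl_eq_tsub_iff {ι κ : Type*} [Fintype ι] [DecidableEq ι] [DecidableEq κ]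
    {f : ι → κ} {mi ki : κ → ℕ} (hmi : ∀ l, #{i | f i = l} = mi l) (hki : ∀ l, ki l ≤ mi l)
    (s : Finset ι) :
    (∀ l, #{i ∈ sᶜ | f i = l} = mi l - ki l) ↔ ∀ l, #{i ∈ s | f i = l} = ki l := by
  have hsplit (l : κ) : #{i ∈ s | f i = l} + #{i ∈ sᶜ | f i = l} = mi l := by
    rw [← hmi l, ← card_union_of_disjoint (disjoint_filter_filter disjoint_compl_right),
      ← filter_union, union_compl]
  exact forall_congr' fun l => by have := hsplit l; have := hki l; omega

theorem mcharCoeff_eq_sum_det_submatrix {m p : ℕ} (M : Matrix (Fin m) (Fin m) ℝ)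
    (part : Fin m → Fin p) (e : Fin p → ℕ) :
    mcharCoeff M part e = ∑ s : Finset (Fin m), (M.submatrix ((↑) : s → Fin m) (↑)).det *
      if ∀ l, #{i ∈ sᶜ | part i = l} = e l then (-1) ^ #sᶜ else 0 := by
  have hmat : Matrix.of (fun i j => MvPolynomial.C (M i j) -
      if i = j then (MvPolynomial.X (part i) : MvPolynomial (Fin p) ℝ) else 0) =
      M.map MvPolynomial.C + Matrix.diagonal fun i => -MvPolynomial.X (part i) := by
    ext i j; by_cases h : i = j <;> simp [h, sub_eq_add_neg]
  rw [mcharCoeff, hmat, Matrix.det_add_diagonal, MvPolynomial.coeff_sum]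
  refine sum_congr rfl fun s _ => ?_
  rw [Matrix.submatrix_map, ← RingHom.mapMatrix_apply, ← RingHom.map_det,
    MvPolynomial.coeff_C_mul, MvPolynomial.coeff_prod_neg_X]
  simp only [Finsupp.coe_equivFunOnFinite_symm]
  -- the two sides differ only in the `Decidable` instance of the condition
  congr

/-- for `A ∈ ℝ^{m×n}` and a partition `[m] = 𝒫₁ ⊎ ⋯ ⊎ 𝒫_p` with `|𝒫_l| = m_l`,
and any `0 ≤ k_l ≤ m_l` with `k = ∑ k_l`, the coefficient `c_{m₁-k₁,…,m_p-k_p}` of the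
multivariate characteristic polynomial of `AA^T` equals
`(-1)^{m-k} ∑_{S : |S ∩ 𝒫_l| = k_l ∀l} det(A_S A_S^T)`. -/
theorem statement1 {m n p : ℕ} (A : Matrix (Fin m) (Fin n) ℝ) (part : Fin m → Fin p)
    (mi ki : Fin p → ℕ)
    (hmi : ∀ l, (Finset.univ.filter (fun i => part i = l)).card = mi l)
    (hki : ∀ l, ki l ≤ mi l) :
    mcharCoeff (A * Aᵀ) part (fun l => mi l - ki l)
      = (-1 : ℝ) ^ (m - ∑ l, ki l) *
        ∑ S ∈ Finset.univ.filter
            (fun S : Finset (Fin m) => ∀ l, (S.filter (fun i => part i = l)).card = ki l),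
          subDet A S := by
  rw [mcharCoeff_eq_sum_det_submatrix, mul_sum, sum_filter]
  refine sum_congr rfl fun s _ => ?_
  simp only [card_filter_compl_eq_tsub_iff hmi hki]
  split_ifs with hs
  · have hcard : #sᶜ = m - ∑ l, ki l := by
      rw [card_compl, Fintype.card_fin,
        card_eq_sum_card_fiberwise (f := part) (t := univ) fun _ _ => mem_univ _]
      simp only [hs]
    rw [hcard, subDet, mul_comm]
  · rw [mul_zero]
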